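/- In dimension d = 2 with a = (1,1), Q = [[c,-c],[-c,c]] with c > 0 and l = (l_1,l_2) with l_1 + l_2 = -α < 0, the Hüsler-Reiss Pareto normalizing constant equals C(Q,l) = (√(2π)/(α√c)) [ e^{l_1²/(2c)} Φ(-l_1/√c) + e^{l_2²/(2c)} Φ(-l_2/√c) ], where Φ is the standard normal cdf. -/

import Mathlib

/-!
In logarithmic coordinates the measure `dz / (z₁ z₂)` becomes Lebesgue measure, and the
integrand becomes `exp (-(c/2) (s - t)² + l₁ s + l₂ t)` on `{s > 0 ∨ t > 0}`. Splitting this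
region along the diagonal and shearing each half to a quadrant (`u = s - t`), the integrand
factors as `exp (-α s) · exp (-(c/2) u² - l₂ u)`: the first factor integrates to `1/α`, and the
second, after completing the square, is a Gaussian tail, i.e. a value of `Φ`.
-/

open MeasureTheory

/-- Standard normal cumulative distribution function. -/
noncomputable def stdNormalCDF (x : ℝ) : ℝ :=
  ∫ t in Set.Iic x, (Real.sqrt (2 * Real.pi))⁻¹ * Real.exp (-t ^ 2 / 2)

open Set Real

lemma integral_Ioi_exp_neg_sq_div_two (a : ℝ) :
    ∫ t in Ioi a, exp (-t ^ 2 / 2) = √(2 * π) * stdNormalCDF (-a) := by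
  have h2π : √(2 * π) ≠ 0 := (sqrt_pos.mpr (by positivity)).ne'
  rw [stdNormalCDF, integral_const_mul, mul_inv_cancel_left₀ h2π, ← integral_comp_neg_Ioi]
  simp

lemma integral_Ioi_comp_add_right {E : Type*} [NormedAddCommGroup E] [NormedSpace ℝ E]
    (f : ℝ → E) (a b : ℝ) :
    ∫ x in Ioi a, f (x + b) = ∫ x in Ioi (a + b), f x := by
  rw [← integral_indicator measurableSet_Ioi, ← integral_indicator measurableSet_Ioi]
  conv_rhs => rw [← integral_add_right_eq_self _ b]
  congr with x
  simp [indicator]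

section Gaussian

variable {c : ℝ}

lemma exp_neg_quadratic_eq (hc : 0 < c) (m u : ℝ) :
    exp (-(c / 2) * u ^ 2 - m * u) =
      exp (m ^ 2 / (2 * c)) * exp (-(√c * u + m / √c) ^ 2 / 2) := by
  have hs : √c ≠ 0 := (sqrt_pos.mpr hc).ne'
  rw [← exp_add]
  congr 1
  field_simp
  rw [sq_sqrt hc.le]
  ring

lemma integrable_exp_neg_quadratic (hc : 0 < c) (m : ℝ) :
    Integrable fun u => exp (-(c / 2) * u ^ 2 - m * u) := by
  simp_rw [exp_neg_quadratic_eq hc, neg_div, div_eq_inv_mul (_ ^ 2), ← neg_mul]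
  exact (((integrable_exp_neg_mul_sq (inv_pos.mpr two_pos)).comp_add_right _).comp_mul_left'
    (sqrt_pos.mpr hc).ne').const_mul _

lemma integral_Ioi_zero_exp_neg_quadratic (hc : 0 < c) (m : ℝ) :
    ∫ u in Ioi 0, exp (-(c / 2) * u ^ 2 - m * u) =
      √(2 * π) / √c * exp (m ^ 2 / (2 * c)) * stdNormalCDF (-m / √c) := by
  simp_rw [exp_neg_quadratic_eq hc, integral_const_mul]
  rw [integral_comp_mul_left_Ioi (fun x => exp (-(x + m / √c) ^ 2 / 2)) 0 (sqrt_pos.mpr hc),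
    mul_zero, integral_Ioi_comp_add_right (fun x => exp (-x ^ 2 / 2)), zero_add,
    integral_Ioi_exp_neg_sq_div_two, smul_eq_mul, neg_div]
  field_simp

end Gaussian

noncomputable def huslerReissIntegrand (c l₁ l₂ : ℝ) (z : ℝ × ℝ) : ℝ :=
  exp (-(c / 2) * (log z.1 - log z.2) ^ 2 + l₁ * log z.1 + l₂ * log z.2) * (z.1 * z.2)⁻¹

lemma huslerReissIntegrand_swap (c l₁ l₂ : ℝ) (z : ℝ × ℝ) :
    huslerReissIntegrand c l₁ l₂ z.swap = huslerReissIntegrand c l₂ l₁ z := by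
  simp only [huslerReissIntegrand, Prod.fst_swap, Prod.snd_swap, mul_comm z.2 z.1]
  ring_nf

def lowerRegion : Set (ℝ × ℝ) := {z | 1 < z.1 ∧ 0 < z.2 ∧ z.2 ≤ z.1}

def upperRegion : Set (ℝ × ℝ) := {z | 0 < z.1 ∧ 1 < z.2 ∧ z.1 ≤ z.2}

lemma preimage_swap_lowerRegion : Prod.swap ⁻¹' lowerRegion = upperRegion := by
  ext z
  simp only [lowerRegion, upperRegion, mem_preimage, mem_ofPred_eq, Prod.fst_swap,
    Prod.snd_swap]
  tauto

lemma measurePreserving_swap_volume :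
    MeasurePreserving (Prod.swap : ℝ × ℝ → ℝ × ℝ) volume volume :=
  Measure.measurePreserving_swap

lemma measurableSet_upperRegion : MeasurableSet upperRegion :=
  (measurableSet_lt measurable_const measurable_fst).inter
    ((measurableSet_lt measurable_const measurable_snd).inter
      (measurableSet_le measurable_fst measurable_snd))

lemma volume_diagonal : volume (diagonal ℝ) = 0 := by
  rw [Measure.volume_eq_prod, Measure.measure_prod_null measurableSet_diagonal]
  refine .of_forall fun x => ?_
  have : Prod.mk x ⁻¹' diagonal ℝ = {x} := by ext; simp [eq_comm]
  simp [this]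

lemma aedisjoint_lowerRegion_upperRegion : AEDisjoint volume lowerRegion upperRegion :=
  measure_mono_null (fun _ ⟨⟨_, _, h⟩, ⟨_, _, h'⟩⟩ => le_antisymm h' h) volume_diagonal

/-- Logarithmic coordinates composed with the shear `t = s - u`; its Jacobian `eˢ eˢ⁻ᵘ = z₁ z₂`
cancels the factor `(z₁ z₂)⁻¹` of `huslerReissIntegrand`. -/
noncomputable def shearExp (w : ℝ × ℝ) : ℝ × ℝ := (exp w.1, exp (w.1 - w.2))

noncomputable def shearExpDeriv (w : ℝ × ℝ) : ℝ × ℝ →L[ℝ] ℝ × ℝ :=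
  (exp w.1 • ContinuousLinearMap.fst ℝ ℝ ℝ).prod
    (exp (w.1 - w.2) • (ContinuousLinearMap.fst ℝ ℝ ℝ - ContinuousLinearMap.snd ℝ ℝ ℝ))

lemma hasFDerivAt_shearExp (w : ℝ × ℝ) : HasFDerivAt shearExp (shearExpDeriv w) w :=
  hasFDerivAt_fst.exp.prodMk (hasFDerivAt_fst.sub hasFDerivAt_snd).exp

lemma det_shearExpDeriv (w : ℝ × ℝ) :
    (shearExpDeriv w).det = -(exp w.1 * exp (w.1 - w.2)) := by
  have : (shearExpDeriv w : ℝ × ℝ →ₗ[ℝ] ℝ × ℝ) =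
      Matrix.toLin (Module.Basis.finTwoProd ℝ) (Module.Basis.finTwoProd ℝ)
        !![exp w.1, 0; exp (w.1 - w.2), -exp (w.1 - w.2)] := by
    ext <;> simp [shearExpDeriv]
  rw [ContinuousLinearMap.det, this, LinearMap.det_toLin, Matrix.det_fin_two_of]
  ring

lemma shearExp_injective : Function.Injective shearExp := by
  intro v w h
  simp only [shearExp, Prod.mk.injEq, exp_eq_exp] at h
  ext <;> linarith

lemma shearExp_image_Ioi_prod_Ici : shearExp '' (Ioi 0 ×ˢ Ici 0) = lowerRegion := by
  ext z
  constructor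
  · rintro ⟨w, ⟨hs, hu⟩, rfl⟩
    exact ⟨one_lt_exp_iff.mpr hs, exp_pos _, exp_le_exp.mpr (by simp_all)⟩
  · rintro ⟨h₁, h₂, h₁₂⟩
    refine ⟨(log z.1, log z.1 - log z.2), ⟨log_pos h₁, ?_⟩, ?_⟩
    · simpa using log_le_log h₂ h₁₂
    · simp [shearExp, exp_log h₂, exp_log (zero_lt_one.trans h₁)]

lemma integrableOn_lowerRegion_iff (g : ℝ × ℝ → ℝ) :
    IntegrableOn g lowerRegion ↔
      IntegrableOn (fun w => |(shearExpDeriv w).det| • g (shearExp w)) (Ioi 0 ×ˢ Ici 0) := by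
  rw [← shearExp_image_Ioi_prod_Ici]
  exact integrableOn_image_iff_integrableOn_abs_det_fderiv_smul _
    (measurableSet_Ioi.prod measurableSet_Ici)
    (fun w _ => (hasFDerivAt_shearExp w).hasFDerivWithinAt) shearExp_injective.injOn g

lemma setIntegral_lowerRegion (g : ℝ × ℝ → ℝ) :
    ∫ z in lowerRegion, g z =
      ∫ w in Ioi 0 ×ˢ Ici 0, |(shearExpDeriv w).det| • g (shearExp w) := by
  rw [← shearExp_image_Ioi_prod_Ici]
  exact integral_image_eq_integral_abs_det_fderiv_smul _
    (measurableSet_Ioi.prod measurableSet_Ici)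
    (fun w _ => (hasFDerivAt_shearExp w).hasFDerivWithinAt) shearExp_injective.injOn g

lemma abs_det_smul_huslerReissIntegrand_shearExp (c l₁ l₂ : ℝ) (w : ℝ × ℝ) :
    |(shearExpDeriv w).det| • huslerReissIntegrand c l₁ l₂ (shearExp w) =
      exp ((l₁ + l₂) * w.1) * exp (-(c / 2) * w.2 ^ 2 - l₂ * w.2) := by
  rw [det_shearExpDeriv, abs_neg, abs_of_pos (by positivity), smul_eq_mul, huslerReissIntegrand,
    shearExp, log_exp, log_exp, mul_comm, mul_assoc, inv_mul_cancel₀ (by positivity), mul_one,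
    ← exp_add]
  ring_nf

section Regions

variable {c l₁ l₂ : ℝ}

lemma integrableOn_huslerReissIntegrand_lowerRegion (hc : 0 < c) (hl : l₁ + l₂ < 0) :
    IntegrableOn (huslerReissIntegrand c l₁ l₂) lowerRegion := by
  rw [integrableOn_lowerRegion_iff]
  simp_rw [abs_det_smul_huslerReissIntegrand_shearExp]
  rw [IntegrableOn, Measure.volume_eq_prod, ← Measure.prod_restrict]
  exact (integrableOn_exp_mul_Ioi hl 0).mul_prod
    (integrable_exp_neg_quadratic hc l₂).integrableOn

lemma setIntegral_huslerReissIntegrand_lowerRegion (hl : l₁ + l₂ < 0) :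
    ∫ z in lowerRegion, huslerReissIntegrand c l₁ l₂ z =
      (∫ u in Ioi 0, exp (-(c / 2) * u ^ 2 - l₂ * u)) / -(l₁ + l₂) := by
  simp_rw [setIntegral_lowerRegion, abs_det_smul_huslerReissIntegrand_shearExp]
  rw [Measure.volume_eq_prod, setIntegral_prod_mul (fun s => exp ((l₁ + l₂) * s))
    (fun u => exp (-(c / 2) * u ^ 2 - l₂ * u)), integral_exp_mul_Ioi hl, mul_zero, exp_zero,
    integral_Ici_eq_integral_Ioi, neg_div, div_neg, neg_mul, one_div, inv_mul_eq_div]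

lemma integrableOn_huslerReissIntegrand_upperRegion (hc : 0 < c) (hl : l₁ + l₂ < 0) :
    IntegrableOn (huslerReissIntegrand c l₁ l₂) upperRegion := by
  have h := integrableOn_huslerReissIntegrand_lowerRegion hc (add_comm l₁ l₂ ▸ hl)
  rw [← measurePreserving_swap_volume.integrableOn_comp_preimage
    MeasurableEquiv.prodComm.measurableEmbedding, preimage_swap_lowerRegion] at h
  simpa only [Function.comp_def, huslerReissIntegrand_swap] using h

lemma setIntegral_huslerReissIntegrand_upperRegion (hl : l₁ + l₂ < 0) :
    ∫ z in upperRegion, huslerReissIntegrand c l₁ l₂ z =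
      (∫ u in Ioi 0, exp (-(c / 2) * u ^ 2 - l₁ * u)) / -(l₁ + l₂) := by
  calc ∫ z in upperRegion, huslerReissIntegrand c l₁ l₂ z
      = ∫ z in Prod.swap ⁻¹' lowerRegion, huslerReissIntegrand c l₂ l₁ z.swap := by
        simp only [preimage_swap_lowerRegion, huslerReissIntegrand_swap]
    _ = ∫ z in lowerRegion, huslerReissIntegrand c l₂ l₁ z :=
      measurePreserving_swap_volume.setIntegral_preimage_emb
        MeasurableEquiv.prodComm.measurableEmbedding _ _
    _ = _ := by rw [setIntegral_huslerReissIntegrand_lowerRegion (add_comm l₁ l₂ ▸ hl), add_comm]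

end Regions

lemma finTwoArrow_preimage_lowerRegion_union_upperRegion :
    MeasurableEquiv.finTwoArrow ⁻¹' (lowerRegion ∪ upperRegion) =
      {z : Fin 2 → ℝ | (∀ i, 0 < z i) ∧ (1 < z 0 ∨ 1 < z 1)} := by
  ext z
  simp only [Fin.forall_fin_two, mem_ofPred_eq, mem_preimage, mem_union,
    MeasurableEquiv.finTwoArrow_apply, lowerRegion, upperRegion]
  constructor
  · rintro (⟨h₀, h₁, -⟩ | ⟨h₀, h₁, -⟩)
    · exact ⟨⟨by linarith, h₁⟩, .inl h₀⟩
    · exact ⟨⟨h₀, by linarith⟩, .inr h₁⟩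
  · rintro ⟨⟨h₀, h₁⟩, h | h⟩ <;> rcases le_total (z 1) (z 0) with h' | h' <;>
      first | exact .inl ⟨by linarith, h₁, h'⟩ | exact .inr ⟨h₀, by linarith, h'⟩

/-- Bivariate Hüsler-Reiss Pareto normalizing constant, `d = 2`, `a = (1,1)`:
`C(Q,l) = (√(2π)/(α√c)) [e^{l₁²/(2c)} Φ(-l₁/√c) + e^{l₂²/(2c)} Φ(-l₂/√c)]`. -/
theorem hr_pareto_normalizing_constant_dim2
    (c l₁ l₂ α : ℝ) (hc : 0 < c) (hα : 0 < α) (hl : l₁ + l₂ = -α) :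
    (∫ z in {z : Fin 2 → ℝ | (∀ i, 0 < z i) ∧ (1 < z 0 ∨ 1 < z 1)},
        Real.exp (-(c / 2) * (Real.log (z 0) - Real.log (z 1)) ^ 2 +
            l₁ * Real.log (z 0) + l₂ * Real.log (z 1)) * (z 0 * z 1)⁻¹) =
      Real.sqrt (2 * Real.pi) / (α * Real.sqrt c) *
        (Real.exp (l₁ ^ 2 / (2 * c)) * stdNormalCDF (-l₁ / Real.sqrt c) +
          Real.exp (l₂ ^ 2 / (2 * c)) * stdNormalCDF (-l₂ / Real.sqrt c)) := by
  have hneg : l₁ + l₂ < 0 := by linarith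
  change ∫ z in _, huslerReissIntegrand c l₁ l₂ (MeasurableEquiv.finTwoArrow z) = _
  rw [← finTwoArrow_preimage_lowerRegion_union_upperRegion,
    (volume_preserving_finTwoArrow ℝ).setIntegral_preimage_emb
      MeasurableEquiv.finTwoArrow.measurableEmbedding,
    setIntegral_union₀ aedisjoint_lowerRegion_upperRegion
      measurableSet_upperRegion.nullMeasurableSet
      (integrableOn_huslerReissIntegrand_lowerRegion hc hneg)
      (integrableOn_huslerReissIntegrand_upperRegion hc hneg),
    setIntegral_huslerReissIntegrand_lowerRegion hneg, setIntegral_huslerReissIntegrand_upperRegion hneg,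
    integral_Ioi_zero_exp_neg_quadratic hc, integral_Ioi_zero_exp_neg_quadratic hc, hl, neg_neg]
  field_simp
  ring
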